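/- Let X be an AM-space and x*₁, …, x*ₙ distinct norm-one lattice homomorphisms on X. Then for every a₁, …, aₙ ∈ [0,1] there exists x in the closed unit ball of X with x*ₖ(x) = aₖ for all k = 1, …, n. -/

import Mathlib

/-- A real-valued lattice homomorphism on a Banach lattice. -/
def IsLatticeHomFunctional {X : Type*} [NormedAddCommGroup X] [Lattice X] [HasSolidNorm X] [IsOrderedAddMonoid X] [NormedSpace ℝ X]
    (f : X →L[ℝ] ℝ) : Prop :=
  ∀ x y : X, f (x ⊔ y) = max (f x) (f y)

/-- An atom of a Banach lattice: a positive element generating a one-dimensional ideal. -/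
def IsLatAtom {X : Type*} [NormedAddCommGroup X] [Lattice X] [HasSolidNorm X] [IsOrderedAddMonoid X] [NormedSpace ℝ X] (x₀ : X) : Prop :=
  0 < x₀ ∧ ∀ y : X, 0 ≤ y → y ≤ x₀ → ∃ r : ℝ, y = r • x₀

/-- `l` is the coordinate functional of the atom `x₀`: the band projection onto the span of
`x₀` is `x ↦ l x • x₀`, i.e. `x - l x • x₀` is disjoint from `x₀` for every `x`. -/
def IsCoordinateFunctional {X : Type*} [NormedAddCommGroup X] [Lattice X] [HasSolidNorm X] [IsOrderedAddMonoid X] [NormedSpace ℝ X]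
    (l : X →L[ℝ] ℝ) (x₀ : X) : Prop :=
  ∀ x : X, |x - l x • x₀| ⊓ x₀ = 0

/-- An equivalent lattice norm on `X`. -/
structure LatticeNorm (X : Type*) [NormedAddCommGroup X] [Lattice X] [NormedSpace ℝ X] where
  n : X → ℝ
  add_le : ∀ x y : X, n (x + y) ≤ n x + n y
  smul_eq : ∀ (r : ℝ) (x : X), n (r • x) = |r| * n x
  eq_zero_of : ∀ x : X, n x = 0 → x = 0
  mono : ∀ x y : X, |x| ≤ |y| → n x ≤ n y
  lower : ∃ c : ℝ, 0 < c ∧ ∀ x : X, c * ‖x‖ ≤ n x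
  upper : ∃ C : ℝ, 0 < C ∧ ∀ x : X, n x ≤ C * ‖x‖

/-!
A norm-one lattice homomorphism `f` attains its norm at a positive element of the unit ball:
starting from a positive `x` in the ball with `f x ≥ c`, the element `x ⊔ (z ⊓ c⁻¹ • x)` is
still in the ball (AM-property), has `f`-value at least `f z`, and lies within `c⁻¹ - 1` of `x`;
iterating with `f z → 1` gives a Cauchy sequence whose limit does it. Distinct norm-one lattice
homomorphisms `f ≠ g` have different kernels, which yields `u ≥ 0` with `f u = 0`, `g u = 1`.
Infima of these give, for each `k`, a `y k` in the ball with `f k (y k) = 1` and `f j (y k) = 0`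
for `j ≠ k`, and then `x = ⨆ k, (a k • y k)⁺` works.

The order of `X` is not assumed to be compatible with scalar multiplication, hence the positive
parts wherever a multiple of a positive element has to stay positive.
-/

section SolidNorm

variable {X : Type*} [NormedAddCommGroup X] [Lattice X] [HasSolidNorm X] [IsOrderedAddMonoid X]

theorem norm_le_norm_of_nonneg_of_le {a b : X} (ha : 0 ≤ a) (hab : a ≤ b) : ‖a‖ ≤ ‖b‖ :=
  norm_le_norm_of_abs_le_abs <| by rwa [abs_of_nonneg ha, abs_of_nonneg (ha.trans hab)]

theorem norm_posPart_le (a : X) : ‖a⁺‖ ≤ ‖a‖ :=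
  norm_le_norm_of_abs_le_abs <| by
    rw [abs_of_nonneg (posPart_nonneg a)]
    exact sup_le (le_abs_self a) (abs_nonneg a)

end SolidNorm

section AMSpace

variable {X : Type*} [NormedAddCommGroup X] [Lattice X]

theorem norm_finset_sup'_le_of_nonneg
    (hAM : ∀ x y : X, 0 ≤ x → 0 ≤ y → ‖x ⊔ y‖ = max ‖x‖ ‖y‖)
    {ι : Type*} {s : Finset ι} (hs : s.Nonempty) {t : ι → X} (ht : ∀ i ∈ s, 0 ≤ t i)
    {r : ℝ} (htr : ∀ i ∈ s, ‖t i‖ ≤ r) : ‖s.sup' hs t‖ ≤ r :=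
  (s.sup'_induction hs t (p := fun x => 0 ≤ x ∧ ‖x‖ ≤ r)
    (fun _ ha _ hb => ⟨le_sup_of_le_left ha.1, by rw [hAM _ _ ha.1 hb.1]; exact max_le ha.2 hb.2⟩)
    fun i hi => ⟨ht i hi, htr i hi⟩).2

end AMSpace

namespace IsLatticeHomFunctional

variable {X : Type*} [NormedAddCommGroup X] [Lattice X] [HasSolidNorm X] [IsOrderedAddMonoid X]
  [NormedSpace ℝ X] {f g : X →L[ℝ] ℝ}

def toLatticeHom (hf : IsLatticeHomFunctional f) : LatticeHom X ℝ where
  toFun := f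
  map_sup' := hf
  map_inf' x y := by
    have h := congrArg f (inf_add_sup x y)
    rw [map_add, map_add, hf] at h
    linarith [min_add_max (f x) (f y)]

@[simp]
theorem coe_toLatticeHom (hf : IsLatticeHomFunctional f) : ⇑hf.toLatticeHom = f := rfl

theorem monotone (hf : IsLatticeHomFunctional f) : Monotone f :=
  OrderHomClass.mono hf.toLatticeHom

theorem nonneg (hf : IsLatticeHomFunctional f) {x : X} (hx : 0 ≤ x) : 0 ≤ f x := by
  simpa using hf.monotone hx

theorem map_abs (hf : IsLatticeHomFunctional f) (x : X) : f |x| = |f x| := by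
  rw [abs_eq_max_neg, ← map_neg, ← hf]
  rfl

theorem map_posPart (hf : IsLatticeHomFunctional f) (x : X) : f x⁺ = (f x)⁺ := by
  rw [posPart_def, posPart_def, hf, map_zero]

theorem exists_nonneg_lt_apply (hf : IsLatticeHomFunctional f) {c : ℝ} (hc : c < ‖f‖) :
    ∃ z : X, 0 ≤ z ∧ ‖z‖ ≤ 1 ∧ c < f z := by
  obtain ⟨x, hx, hcx⟩ := f.exists_lt_apply_of_lt_opNorm hc
  exact ⟨|x|, abs_nonneg x, (norm_abs_eq_norm x).trans_le hx.le, by rwa [hf.map_abs]⟩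

theorem exists_near_apply_ge (hAM : ∀ x y : X, 0 ≤ x → 0 ≤ y → ‖x ⊔ y‖ = max ‖x‖ ‖y‖)
    (hf : IsLatticeHomFunctional f) (hfn : ‖f‖ ≤ 1) {x z : X} (hx : 0 ≤ x) (hx1 : ‖x‖ ≤ 1)
    (hz : 0 ≤ z) (hz1 : ‖z‖ ≤ 1) {c : ℝ} (hc : 0 < c) (hcx : c ≤ f x) :
    ∃ y : X, 0 ≤ y ∧ ‖y‖ ≤ 1 ∧ f z ≤ f y ∧ ‖y - x‖ ≤ c⁻¹ - 1 := by
  set w := z ⊓ c⁻¹ • x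
  have hf1 : ∀ v : X, ‖v‖ ≤ 1 → f v ≤ 1 := fun v hv =>
    (le_abs_self _).trans <| (f.le_of_opNorm_le hfn v).trans <| by rwa [one_mul]
  have hfz := hf1 z hz1
  have hfw : f z ≤ f w := by
    have : 1 ≤ c⁻¹ * f x := by rw [le_inv_mul_iff₀ hc]; linarith
    rw [← hf.coe_toLatticeHom, map_inf, hf.coe_toLatticeHom, map_smul, smul_eq_mul]
    exact le_min le_rfl (hfz.trans this)
  have hw1 : ‖w⁺‖ ≤ 1 := by
    refine (norm_le_norm_of_nonneg_of_le (posPart_nonneg w) ?_).trans hz1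
    calc w⁺ ≤ z⁺ := posPart_mono inf_le_left
      _ = z := posPart_eq_self.mpr hz
  have hy : w ⊔ x = w⁺ ⊔ x := by rw [posPart_def, sup_assoc, sup_eq_right.mpr hx]
  refine ⟨w ⊔ x, hx.trans le_sup_right, ?_, hfw.trans (hf.monotone le_sup_left), ?_⟩
  · rw [hy, hAM _ _ (posPart_nonneg w) hx]
    exact max_le hw1 hx1
  · have hwx : w - x ≤ (c⁻¹ - 1) • x := by
      rw [sub_smul, one_smul]
      exact sub_le_sub_right inf_le_right x
    calc ‖w ⊔ x - x‖ = ‖(w - x)⁺‖ := by rw [sup_eq_add_posPart_sub, add_sub_cancel_left]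
      _ ≤ ‖((c⁻¹ - 1) • x)⁺‖ :=
        norm_le_norm_of_nonneg_of_le (posPart_nonneg _) (posPart_mono hwx)
      _ ≤ ‖(c⁻¹ - 1) • x‖ := norm_posPart_le _
      _ ≤ c⁻¹ - 1 := by
        have : 1 ≤ c⁻¹ := by rw [one_le_inv₀ hc]; linarith [hf1 x hx1]
        rw [norm_smul, Real.norm_eq_abs, abs_of_nonneg (by linarith)]
        exact mul_le_of_le_one_right (by linarith) hx1

theorem exists_apply_eq_one [CompleteSpace X]
    (hAM : ∀ x y : X, 0 ≤ x → 0 ≤ y → ‖x ⊔ y‖ = max ‖x‖ ‖y‖)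
    (hf : IsLatticeHomFunctional f) (hfn : ‖f‖ = 1) : ∃ e : X, 0 ≤ e ∧ ‖e‖ ≤ 1 ∧ f e = 1 := by
  set δ : ℕ → ℝ := fun m => 1 / 4 / 2 ^ m
  have hδ : ∀ m, 0 < δ m ∧ δ m ≤ 1 / 4 := fun m =>
    ⟨by positivity, div_le_self (by norm_num) (one_le_pow₀ (by norm_num))⟩
  set S : ℕ → Set X := fun m => {x | 0 ≤ x ∧ ‖x‖ ≤ 1 ∧ 1 - δ m < f x}
  have hS : ∀ m, ∃ x, x ∈ S m := fun m =>
    hf.exists_nonneg_lt_apply (by rw [hfn]; linarith [hδ m])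
  have step : ∀ m, ∀ x ∈ S m, ∃ y ∈ S (m + 1), dist x y ≤ 1 / 2 / 2 ^ m := by
    rintro m x ⟨hx, hx1, hfx⟩
    obtain ⟨z, hz, hz1, hfz⟩ := hS (m + 1)
    obtain ⟨y, hy, hy1, hfzy, hyx⟩ := exists_near_apply_ge hAM hf hfn.le hx hx1 hz hz1
      (by linarith [hδ m]) hfx.le
    refine ⟨y, ⟨hy, hy1, hfz.trans_le hfzy⟩, ?_⟩
    have : (1 - δ m)⁻¹ ≤ 1 + 2 * δ m := by
      rw [inv_le_iff_one_le_mul₀' (by linarith [hδ m])]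
      nlinarith [hδ m]
    rw [dist_eq_norm']
    calc ‖y - x‖ ≤ (1 - δ m)⁻¹ - 1 := hyx
      _ ≤ 2 * δ m := by linarith
      _ = 1 / 2 / 2 ^ m := by ring
  obtain ⟨x₀, hx₀⟩ := hS 0
  choose! next hnext using step
  set Z : ℕ → X := fun m => Nat.rec x₀ next m
  have hZ : ∀ m, Z m ∈ S m := by
    intro m
    induction m with
    | zero => exact hx₀
    | succ m ih => exact (hnext m _ ih).1
  obtain ⟨e, he⟩ := cauchySeq_tendsto_of_complete <|
    cauchySeq_of_le_geometric_two (C := 1) fun m => (hnext m _ (hZ m)).2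
  have he1 : ‖e‖ ≤ 1 := le_of_tendsto' he.norm fun m => (hZ m).2.1
  refine ⟨e, ge_of_tendsto' he fun m => (hZ m).1, he1, le_antisymm ?_ ?_⟩
  · exact (le_abs_self _).trans <| (f.le_of_opNorm_le hfn.le e).trans <| by rwa [one_mul]
  · have hδ0 : Filter.Tendsto δ Filter.atTop (nhds 0) := by
      simpa using tendsto_const_nhds.div_atTop (tendsto_pow_atTop_atTop_of_one_lt one_lt_two)
    exact le_of_tendsto_of_tendsto' (by simpa using hδ0.const_sub 1)
      ((f.continuous.tendsto e).comp he) fun m => (hZ m).2.2.le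

theorem exists_nonneg_apply_eq_zero_apply_eq_one (hf : IsLatticeHomFunctional f)
    (hg : IsLatticeHomFunctional g) (hfn : ‖f‖ = 1) (hgn : ‖g‖ = 1) (hfg : f ≠ g) :
    ∃ u : X, 0 ≤ u ∧ f u = 0 ∧ g u = 1 := by
  suffices ∃ x, f x = 0 ∧ g x ≠ 0 by
    obtain ⟨x, hfx, hgx⟩ := this
    exact ⟨((g x)⁻¹ • x)⁺, posPart_nonneg _, by simp [hf.map_posPart, hfx],
      by simp [hg.map_posPart, hgx]⟩
  by_contra! hker
  obtain ⟨z, hz, -, hfz⟩ := hf.exists_nonneg_lt_apply (c := 0) (by rw [hfn]; exact one_pos)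
  set c := g z / f z
  have hgf : g = c • f := by
    ext x
    have := hker (x - (f x / f z) • z) (by simp [hfz.ne'])
    rw [map_sub, map_smul, smul_eq_mul, sub_eq_zero] at this
    simp only [smul_apply, smul_eq_mul, this, c]
    ring
  have hc : c = 1 := by
    have hc0 : 0 ≤ c := div_nonneg (hg.nonneg hz) hfz.le
    have := congrArg norm hgf
    rwa [norm_smul, hfn, hgn, mul_one, Real.norm_eq_abs, abs_of_nonneg hc0, eq_comm] at this
  exact hfg (by rw [hgf, hc, one_smul])

end IsLatticeHomFunctional

section Biorthogonal

variable {X : Type*} [NormedAddCommGroup X] [Lattice X] [HasSolidNorm X] [IsOrderedAddMonoid X]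
  [NormedSpace ℝ X]

theorem exists_norm_le_one_biorthogonal [CompleteSpace X]
    (hAM : ∀ x y : X, 0 ≤ x → 0 ≤ y → ‖x ⊔ y‖ = max ‖x‖ ‖y‖)
    {ι : Type*} [Fintype ι] {f : ι → X →L[ℝ] ℝ} (hinj : Function.Injective f)
    (hhom : ∀ k, IsLatticeHomFunctional (f k)) (hnorm : ∀ k, ‖f k‖ = 1) (k : ι) :
    ∃ y : X, ‖y‖ ≤ 1 ∧ f k y = 1 ∧ ∀ j ≠ k, f j y = 0 := by
  obtain ⟨e, he, he1, hfe⟩ := (hhom k).exists_apply_eq_one hAM (hnorm k)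
  have hsep : ∀ j, ∃ u : X, 0 ≤ u ∧ f k u = 1 ∧ (j ≠ k → f j u = 0) := fun j => by
    by_cases hjk : j = k
    · exact ⟨e, he, hfe, fun h => (h hjk).elim⟩
    · obtain ⟨u, hu, hju, hku⟩ := (hhom j).exists_nonneg_apply_eq_zero_apply_eq_one (hhom k)
        (hnorm j) (hnorm k) (hinj.ne hjk)
      exact ⟨u, hu, hku, fun _ => hju⟩
  choose u hu hku hju using hsep
  have hne : (Finset.univ : Finset ι).Nonempty := ⟨k, Finset.mem_univ k⟩
  set y := e ⊓ Finset.univ.inf' hne u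
  have hy : 0 ≤ y := le_inf he (Finset.le_inf' hne u fun j _ => hu j)
  refine ⟨y, (norm_le_norm_of_nonneg_of_le hy inf_le_left).trans he1, ?_, fun j hjk => ?_⟩
  · rw [← (hhom k).coe_toLatticeHom, map_inf, map_finset_inf']
    simp [Function.comp_def, hfe, hku]
  · have hyu : y ≤ u j := inf_le_right.trans (Finset.inf'_le u (Finset.mem_univ j))
    exact le_antisymm (((hhom j).monotone hyu).trans_eq (hju j hjk)) ((hhom j).nonneg hy)

theorem exists_norm_le_one_apply_eq_of_biorthogonal
    (hAM : ∀ x y : X, 0 ≤ x → 0 ≤ y → ‖x ⊔ y‖ = max ‖x‖ ‖y‖)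
    {ι : Type*} [Fintype ι] [Nonempty ι] {f : ι → X →L[ℝ] ℝ}
    (hhom : ∀ k, IsLatticeHomFunctional (f k)) {y : ι → X} (hy1 : ∀ k, ‖y k‖ ≤ 1)
    (hyk : ∀ k, f k (y k) = 1) (hyj : ∀ k, ∀ j ≠ k, f j (y k) = 0)
    {a : ι → ℝ} (ha : ∀ k, a k ∈ Set.Icc (0 : ℝ) 1) :
    ∃ x : X, ‖x‖ ≤ 1 ∧ ∀ k, f k x = a k := by
  classical
  have hne : (Finset.univ : Finset ι).Nonempty := Finset.univ_nonempty
  have hterm : ∀ j k, f j (a k • y k)⁺ = if k = j then a j else 0 := by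
    intro j k
    rw [(hhom j).map_posPart, map_smul, smul_eq_mul]
    split_ifs with hkj
    · rw [hkj, hyk, mul_one, posPart_eq_self.mpr (ha j).1]
    · rw [hyj k j (Ne.symm hkj), mul_zero, posPart_zero]
  refine ⟨Finset.univ.sup' hne fun k => (a k • y k)⁺, ?_, fun j => ?_⟩
  · refine norm_finset_sup'_le_of_nonneg hAM hne (fun k _ => posPart_nonneg _) fun k _ => ?_
    refine (norm_posPart_le _).trans ?_
    rw [norm_smul, Real.norm_eq_abs, abs_of_nonneg (ha k).1]
    exact mul_le_one₀ (ha k).2 (norm_nonneg _) (hy1 k)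
  · rw [← (hhom j).coe_toLatticeHom, map_finset_sup']
    refine le_antisymm (Finset.sup'_le hne _ fun k _ => ?_)
      (Finset.le_sup'_of_le _ (Finset.mem_univ j) (by simp [hterm]))
    simp only [Function.comp_apply, IsLatticeHomFunctional.coe_toLatticeHom, hterm]
    split_ifs
    exacts [le_rfl, (ha j).1]

end Biorthogonal

/-- given distinct norm-one lattice homomorphisms `f 1, …, f n` on an
AM-space and values `a k ∈ [0,1]`, there is an `x` in the closed unit ball with
`f k x = a k` for all `k`. -/
theorem AM_space_urysohn_for_latticeHoms
    {X : Type*} [NormedAddCommGroup X] [Lattice X] [HasSolidNorm X] [IsOrderedAddMonoid X] [NormedSpace ℝ X] [CompleteSpace X]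
    (hAM : ∀ x y : X, 0 ≤ x → 0 ≤ y → ‖x ⊔ y‖ = max ‖x‖ ‖y‖)
    (n : ℕ) (f : Fin n → (X →L[ℝ] ℝ)) (hinj : Function.Injective f)
    (hhom : ∀ k, IsLatticeHomFunctional (f k)) (hnorm : ∀ k, ‖f k‖ = 1)
    (a : Fin n → ℝ) (ha : ∀ k, a k ∈ Set.Icc (0:ℝ) 1) :
    ∃ x : X, ‖x‖ ≤ 1 ∧ ∀ k, f k x = a k := by
  rcases isEmpty_or_nonempty (Fin n) with _ | _
  · exact ⟨0, by simp, fun k => isEmptyElim k⟩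
  choose y hy1 hyk hyj using exists_norm_le_one_biorthogonal hAM hinj hhom hnorm
  exact exists_norm_le_one_apply_eq_of_biorthogonal hAM hhom hy1 hyk hyj ha
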